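/- Let X and Y be schemes of finite type over a finite field F_q, with Hasse-Weil zeta functions Z(X,t), Z(Y,t), Z(X ×_{F_q} Y, t) ∈ ℚ[[t]]. Then for every n ≥ 1, the n-th ghost coordinate of Z(X ×_{F_q} Y, t) equals the product of the n-th ghost coordinates of Z(X,t) and Z(Y,t): gh_n(Z(X ×_{F_q} Y, t)) = gh_n(Z(X,t)) · gh_n(Z(Y,t)). (This is the statement that Z(X ×_{F_q} Y, t) = Z(X,t) *_W Z(Y,t), the product in the big Witt ring W(ℤ), since a power series over ℤ is determined by its ghost coordinates and Witt multiplication is pointwise multiplication of ghost coordinates.) -/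

import Mathlib

open AlgebraicGeometry CategoryTheory

noncomputable section

/-- The set `X(K)` of `K`-points of a scheme `X` over `Spec k`. -/
def ptsOver (k : Type) [Field k] (K : Type) [Field K] [Algebra k K]
    (X : Scheme) (f : X ⟶ Spec (CommRingCat.of k)) : Type :=
  { g : Spec (CommRingCat.of K) ⟶ X //
      g ≫ f = Spec.map (CommRingCat.ofHom (algebraMap k K)) }

/-- The exponential `exp(L(t))` of a power series `L` over `ℚ` (intended for `L` with
zero constant coefficient). -/
def expComp (L : PowerSeries ℚ) : PowerSeries ℚ :=
  PowerSeries.mk fun n =>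
    ∑ j ∈ Finset.range (n + 1), PowerSeries.coeff n (L ^ j) / (Nat.factorial j : ℚ)

/-- The Hasse-Weil zeta function `exp(∑_{r≥1} N_r tʳ/r)` attached to a point-count
function `N : ℕ → ℕ`. -/
def zetaOfCounts (N : ℕ → ℕ) : PowerSeries ℚ :=
  expComp (PowerSeries.mk fun r => if r = 0 then 0 else (N r : ℚ) / r)

/-- The `n`-th ghost coordinate of a power series `P` (with constant coefficient `1`)
over `ℚ`: the `n`-th coefficient of `t·P'(t)/P(t)`. -/
def ghost (n : ℕ) (P : PowerSeries ℚ) : ℚ :=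
  PowerSeries.coeff n (PowerSeries.X * P.derivativeFun * P⁻¹)

/-! The logarithmic derivative of `exp L` is `L'` (chain rule for substitution into `exp`), so the
`n`-th ghost coordinate of `exp(∑ N_r tʳ/r)` is `n · N_n / n = N_n`. By the universal property of
the fibre product, `(X ×ₖ Y)(K) ≃ X(K) × Y(K)`, so point counts, and hence ghost coordinates,
multiply. -/

open PowerSeries

lemma PowerSeries.coeff_pow_eq_zero_of_lt {R : Type*} [CommSemiring R] {L : R⟦X⟧}
    (hL : constantCoeff L = 0) {n d : ℕ} (h : n < d) : coeff n (L ^ d) = 0 :=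
  X_pow_dvd_iff.mp (pow_dvd_pow_of_dvd (X_dvd_iff.mpr hL) d) n h

lemma PowerSeries.coeff_X_mul_derivative {R : Type*} [CommSemiring R] (f : R⟦X⟧) (n : ℕ) :
    coeff n (X * d⁄dX R f) = n * coeff n f := by
  cases n with
  | zero => simp
  | succ m => rw [coeff_succ_X_mul, coeff_derivative]; push_cast; ring

lemma expComp_eq_exp_subst {L : ℚ⟦X⟧} (hL : constantCoeff L = 0) :
    expComp L = (exp ℚ).subst L := by
  ext n
  rw [expComp, coeff_mk, coeff_subst' (HasSubst.of_constantCoeff_zero' hL),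
    finsum_eq_sum_of_support_subset (s := Finset.range (n + 1)) _ fun d hd => ?_]
  · refine Finset.sum_congr rfl fun d _ => ?_
    simp [coeff_exp, div_eq_inv_mul]
  · by_contra hdn
    simp only [Finset.coe_range, Set.mem_Iio, not_lt] at hdn
    exact hd (by simp only [coeff_pow_eq_zero_of_lt hL (by omega : n < d), smul_zero])

lemma derivative_expComp {L : ℚ⟦X⟧} (hL : constantCoeff L = 0) :
    d⁄dX ℚ (expComp L) = expComp L * d⁄dX ℚ L := by
  rw [expComp_eq_exp_subst hL, derivative_subst (HasSubst.of_constantCoeff_zero' hL),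
    derivative_exp]

lemma constantCoeff_expComp (L : ℚ⟦X⟧) : constantCoeff (expComp L) = 1 := by
  rw [← coeff_zero_eq_constantCoeff_apply, expComp, coeff_mk]
  simp

lemma ghost_expComp {L : ℚ⟦X⟧} (hL : constantCoeff L = 0) (n : ℕ) :
    ghost n (expComp L) = n * coeff n L := by
  have hunit : expComp L * (expComp L)⁻¹ = 1 :=
    PowerSeries.mul_inv_cancel _ (by rw [constantCoeff_expComp]; exact one_ne_zero)
  change coeff n (X * d⁄dX ℚ (expComp L) * (expComp L)⁻¹) = _
  rw [derivative_expComp hL, ← coeff_X_mul_derivative]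
  congr 1
  linear_combination (X * d⁄dX ℚ L) * hunit

lemma ghost_zetaOfCounts (N : ℕ → ℕ) {n : ℕ} (hn : 0 < n) :
    ghost n (zetaOfCounts N) = N n := by
  rw [zetaOfCounts, ghost_expComp (by simp [← coeff_zero_eq_constantCoeff_apply]), coeff_mk,
    if_neg hn.ne']
  field_simp

lemma ghost_zetaOfCounts_mul (N M : ℕ → ℕ) {n : ℕ} (hn : 0 < n) :
    ghost n (zetaOfCounts fun r => N r * M r) =
      ghost n (zetaOfCounts N) * ghost n (zetaOfCounts M) := by
  simp only [ghost_zetaOfCounts _ hn, Nat.cast_mul]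

open Limits in
def ptsOverPullbackEquiv (k : Type) [Field k] (K : Type) [Field K] [Algebra k K]
    {X Y : Scheme} (f : X ⟶ Spec (CommRingCat.of k)) (g : Y ⟶ Spec (CommRingCat.of k)) :
    ptsOver k K (pullback f g) (pullback.fst f g ≫ f) ≃ ptsOver k K X f × ptsOver k K Y g where
  toFun x :=
    (⟨x.1 ≫ pullback.fst f g, by rw [Category.assoc]; exact x.2⟩,
     ⟨x.1 ≫ pullback.snd f g, by rw [Category.assoc, ← pullback.condition]; exact x.2⟩)
  invFun p :=
    ⟨pullback.lift p.1.1 p.2.1 (by rw [p.1.2, p.2.2]), by rw [pullback.lift_fst_assoc, p.1.2]⟩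
  left_inv x := Subtype.ext (pullback.hom_ext (pullback.lift_fst ..) (pullback.lift_snd ..))
  right_inv p := Prod.ext (Subtype.ext (pullback.lift_fst ..)) (Subtype.ext (pullback.lift_snd ..))

theorem zeta_of_product_is_witt_product_general
    {k : Type} [Field k]
    (K : ℕ → Type) [∀ r, Field (K r)] [∀ r, Algebra k (K r)]
    (X Y : Scheme) (f : X ⟶ Spec (CommRingCat.of k)) (g : Y ⟶ Spec (CommRingCat.of k))
    (n : ℕ) (hn : 1 ≤ n) :
    ghost n (zetaOfCounts fun r =>
        Nat.card (ptsOver k (K r) (Limits.pullback f g) (Limits.pullback.fst f g ≫ f))) =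
      ghost n (zetaOfCounts fun r => Nat.card (ptsOver k (K r) X f)) *
        ghost n (zetaOfCounts fun r => Nat.card (ptsOver k (K r) Y g)) := by
  simp only [Nat.card_congr (ptsOverPullbackEquiv k _ f g), Nat.card_prod]
  exact ghost_zetaOfCounts_mul _ _ hn

/-- **The zeta function of a product is the Witt product of the zeta functions.**
Let `X`, `Y` be schemes of finite type over a finite field `k = F_q`, with `K r` a
degree-`r` extension of `k`, and let `Z(X,t) = exp(∑_{r≥1} #X(K r) tʳ/r)` be the
Hasse-Weil zeta function.  Then for every `n ≥ 1`,
`gh_n(Z(X ×_k Y, t)) = gh_n(Z(X,t)) · gh_n(Z(Y,t))`, which is precisely the statement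
that `Z(X ×_k Y, t) = Z(X,t) *_W Z(Y,t)` in the big Witt ring `W(ℤ)`. -/
theorem zeta_of_product_is_witt_product
    {k : Type} [Field k] [Fintype k]
    (K : ℕ → Type) [∀ r, Field (K r)] [∀ r, Algebra k (K r)]
    (hK : ∀ r, 1 ≤ r → Module.finrank k (K r) = r)
    (X Y : Scheme) (f : X ⟶ Spec (CommRingCat.of k)) (g : Y ⟶ Spec (CommRingCat.of k))
    [LocallyOfFiniteType f] [QuasiCompact f] [LocallyOfFiniteType g] [QuasiCompact g]
    (n : ℕ) (hn : 1 ≤ n) :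
    ghost n (zetaOfCounts fun r =>
        Nat.card (ptsOver k (K r) (Limits.pullback f g) (Limits.pullback.fst f g ≫ f))) =
      ghost n (zetaOfCounts fun r => Nat.card (ptsOver k (K r) X f)) *
        ghost n (zetaOfCounts fun r => Nat.card (ptsOver k (K r) Y g)) :=
  zeta_of_product_is_witt_product_general K X Y f g n hn

end
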